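/- Let P₁, P₂ be m×n real matrices and q₁, q₂ ∈ ℝᵐ, and suppose there exist 1 ≤ ℓ ≤ m and an ℓ×ℓ lower triangular matrix M with positive diagonal entries such that P₁^[ℓ] = M P₂^[ℓ] and q₁^[ℓ] ≺ M q₂^[ℓ], where •^[ℓ] denotes the first ℓ rows. Then for all x, P₁x ≺ q₁ implies P₂x ≺ q₂. -/

import Mathlib

/-! Write `r = q₁ - P₁ x` and `s = q₂ - P₂ x`. The hypotheses give
`M s^[ℓ] = (M q₂^[ℓ] - q₁^[ℓ]) + r^[ℓ]`. Truncating `r ≻ 0` leaves a vector that is `≻ 0` or zero,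
so the right-hand side is `≻ 0`. A lower triangular `M` with positive diagonal reflects `≻ 0`,
since the leading zeros and the first nonzero entry of `M v` are those of `v`, scaled by the
diagonal; hence `s^[ℓ] ≻ 0`, and so `s ≻ 0`. -/

open Matrix

/-- `v ≻ 0`: `v` is nonzero and its first nonzero entry is positive. -/
def lexPos {m : ℕ} (v : Fin m → ℝ) : Prop :=
  ∃ k : Fin m, 0 < v k ∧ ∀ j : Fin m, j < k → v j = 0

theorem lexPos_add {m : ℕ} {v w : Fin m → ℝ} (hv : lexPos v) (hw : lexPos w) :
    lexPos (v + w) := by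
  have of_le : ∀ {v w : Fin m → ℝ} {k k' : Fin m}, 0 < v k → (∀ j < k, v j = 0) →
      0 < w k' → (∀ j < k', w j = 0) → k ≤ k' → lexPos (v + w) := by
    intro v w k k' hvk hv0 hwk' hw0 hkk'
    have hwk : 0 ≤ w k := by
      rcases hkk'.lt_or_eq with hlt | rfl
      · exact (hw0 k hlt).ge
      · exact hwk'.le
    exact ⟨k, by simpa using add_pos_of_pos_of_nonneg hvk hwk, fun j hj => by
      simp [hv0 j hj, hw0 j (hj.trans_le hkk')]⟩
  obtain ⟨k, hvk, hv0⟩ := hv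
  obtain ⟨k', hwk', hw0⟩ := hw
  rcases le_total k k' with hkk' | hk'k
  · exact of_le hvk hv0 hwk' hw0 hkk'
  · rw [add_comm]
    exact of_le hwk' hw0 hvk hv0 hk'k

theorem lexPos_comp_castLE_or_eq_zero {m ℓ : ℕ} (h : ℓ ≤ m) {v : Fin m → ℝ} (hv : lexPos v) :
    lexPos (v ∘ Fin.castLE h) ∨ v ∘ Fin.castLE h = 0 := by
  obtain ⟨k, hk, hk0⟩ := hv
  by_cases hkℓ : (k : ℕ) < ℓ
  · exact .inl ⟨⟨k, hkℓ⟩, hk, fun j hj => hk0 _ (Fin.lt_def.mpr hj)⟩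
  · exact .inr <| funext fun j => hk0 _ (Fin.lt_def.mpr (by simp; omega))

theorem lexPos_of_lexPos_comp_castLE {m ℓ : ℕ} (h : ℓ ≤ m) {v : Fin m → ℝ}
    (hv : lexPos (v ∘ Fin.castLE h)) : lexPos v := by
  obtain ⟨k, hk, hk0⟩ := hv
  refine ⟨Fin.castLE h k, hk, fun j hj => ?_⟩
  have hjℓ : (j : ℕ) < ℓ := (Fin.lt_def.mp hj).trans k.isLt
  exact hk0 ⟨j, hjℓ⟩ (Fin.lt_def.mpr hj)

theorem mulVec_apply_eq_diag_mul {ι R : Type*} [Fintype ι] [LinearOrder ι]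
    [NonUnitalNonAssocSemiring R] {M : Matrix ι ι R} (hM : ∀ i j, i < j → M i j = 0)
    {v : ι → R} {j : ι} (hv : ∀ i < j, v i = 0) : (M *ᵥ v) j = M j j * v j := by
  refine Finset.sum_eq_single j (fun i _ hij => ?_) (by simp)
  rcases hij.lt_or_gt with hlt | hgt
  · simp [hv i hlt]
  · simp [hM j i hgt]

theorem lexPos_of_lexPos_mulVec {ℓ : ℕ} {M : Matrix (Fin ℓ) (Fin ℓ) ℝ}
    (hMlow : ∀ i j : Fin ℓ, i < j → M i j = 0) (hMdiag : ∀ i : Fin ℓ, 0 < M i i)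
    {v : Fin ℓ → ℝ} (h : lexPos (M *ᵥ v)) : lexPos v := by
  obtain ⟨k, hk, hk0⟩ := h
  have hv0 : ∀ j < k, v j = 0 := by
    intro j
    induction j using WellFoundedLT.induction with
    | _ j ih =>
      intro hj
      have hMvj := hk0 j hj
      rw [mulVec_apply_eq_diag_mul hMlow fun i hi => ih i hi (hi.trans hj)] at hMvj
      exact (mul_eq_zero.mp hMvj).resolve_left (hMdiag j).ne'
  rw [mulVec_apply_eq_diag_mul hMlow hv0] at hk
  exact ⟨k, pos_of_mul_pos_right hk (hMdiag k).le, hv0⟩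

theorem lex_implication_of_truncated_relation_general (m n ℓ : ℕ)
    (P₁ P₂ : Matrix (Fin m) (Fin n) ℝ) (q₁ q₂ : Fin m → ℝ)
    (hℓm : ℓ ≤ m)
    (M : Matrix (Fin ℓ) (Fin ℓ) ℝ)
    (hMlow : ∀ i j : Fin ℓ, i < j → M i j = 0)
    (hMdiag : ∀ i : Fin ℓ, 0 < M i i)
    (hP : P₁.submatrix (Fin.castLE hℓm) id = M * P₂.submatrix (Fin.castLE hℓm) id)
    (hq : lexPos (M *ᵥ (fun i : Fin ℓ => q₂ (Fin.castLE hℓm i)) -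
      (fun i : Fin ℓ => q₁ (Fin.castLE hℓm i)))) :
    ∀ x : Fin n → ℝ, lexPos (q₁ - P₁ *ᵥ x) → lexPos (q₂ - P₂ *ᵥ x) := by
  intro x hx
  set c := Fin.castLE hℓm
  have htrunc : ∀ A : Matrix (Fin m) (Fin n) ℝ, (A *ᵥ x) ∘ c = A.submatrix c id *ᵥ x :=
    fun _ => rfl
  have hsplit : M *ᵥ ((q₂ - P₂ *ᵥ x) ∘ c) =
      (M *ᵥ (q₂ ∘ c) - q₁ ∘ c) + (q₁ - P₁ *ᵥ x) ∘ c := by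
    rw [Pi.sub_comp, Pi.sub_comp, mulVec_sub, htrunc, htrunc, mulVec_mulVec, ← hP]
    abel
  have hMs : lexPos (M *ᵥ ((q₂ - P₂ *ᵥ x) ∘ c)) := by
    rw [hsplit]
    rcases lexPos_comp_castLE_or_eq_zero hℓm hx with hr | hr
    · exact lexPos_add hq hr
    · rw [hr, add_zero]
      exact hq
  exact lexPos_of_lexPos_comp_castLE hℓm (lexPos_of_lexPos_mulVec hMlow hMdiag hMs)

theorem lex_implication_of_truncated_relation (m n ℓ : ℕ)
    (P₁ P₂ : Matrix (Fin m) (Fin n) ℝ) (q₁ q₂ : Fin m → ℝ)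
    (hℓ₁ : 1 ≤ ℓ) (hℓm : ℓ ≤ m)
    (M : Matrix (Fin ℓ) (Fin ℓ) ℝ)
    (hMlow : ∀ i j : Fin ℓ, i < j → M i j = 0)
    (hMdiag : ∀ i : Fin ℓ, 0 < M i i)
    (hP : P₁.submatrix (Fin.castLE hℓm) id = M * P₂.submatrix (Fin.castLE hℓm) id)
    (hq : lexPos (M *ᵥ (fun i : Fin ℓ => q₂ (Fin.castLE hℓm i)) -
      (fun i : Fin ℓ => q₁ (Fin.castLE hℓm i)))) :
    ∀ x : Fin n → ℝ, lexPos (q₁ - P₁ *ᵥ x) → lexPos (q₂ - P₂ *ᵥ x) :=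
  lex_implication_of_truncated_relation_general m n ℓ P₁ P₂ q₁ q₂ hℓm M hMlow hMdiag hP hq
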